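/- arXiv:1912.07994 — 2 statements merged into one kernel-verified Lean document; each statement's English description precedes it below -/
import Mathlib

section
/- Let n ≥ 1 and k ≥ 1 be integers and b ∈ ℝⁿ. Set λ(k,b) := inf{ Σ_{i=1}^n (m_i + k b_i)² : m ∈ ℤⁿ }. Then for every smooth function φ : ℝⁿ → ℂ that is 2πℤⁿ-periodic (φ(θ + 2πm) = φ(θ) for all m ∈ ℤⁿ), one has ∫_{[0,2π]ⁿ} Σ_{i=1}^n |∂φ/∂θ^i(θ) + √(−1)·k·b_i·φ(θ)|² dθ ≥ λ(k,b) · ∫_{[0,2π]ⁿ} |φ(θ)|² dθ. -/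
open MeasureTheory Real Set Complex intervalIntegral
open scoped ENNReal NNReal

noncomputable section

lemma twopi_pos : (0:ℝ) < 2 * Real.pi := by positivity

instance fact_twopi : Fact ((0:ℝ) < 2 * Real.pi) := ⟨twopi_pos⟩

/-- The 1D set of shifted squares. -/
def S1 (c : ℝ) : Set ℝ := {x : ℝ | ∃ m : ℤ, x = ((m : ℝ) + c) ^ 2}

lemma S1_nonempty (c : ℝ) : (S1 c).Nonempty := ⟨((0:ℤ) + c)^2, 0, rfl⟩

lemma S1_bddBelow (c : ℝ) : BddBelow (S1 c) := ⟨0, by rintro x ⟨m, rfl⟩; positivity⟩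

lemma sInf_S1_nonneg (c : ℝ) : 0 ≤ sInf (S1 c) :=
  le_csInf (S1_nonempty c) (by rintro x ⟨m, rfl⟩; positivity)

lemma sInf_S1_le (c : ℝ) (m : ℤ) : sInf (S1 c) ≤ ((m : ℝ) + c) ^ 2 :=
  csInf_le (S1_bddBelow c) ⟨m, rfl⟩

lemma round_min (c : ℝ) (m : ℤ) : ((round (-c) : ℝ) + c) ^ 2 ≤ ((m : ℝ) + c) ^ 2 := by
  have habs : |(-c) - (round (-c) : ℝ)| ≤ |(-c) - (m : ℝ)| := by
    rcases eq_or_ne m (round (-c)) with rfl | hm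
    · exact le_rfl
    · have h1 : |(-c) - (round (-c) : ℝ)| ≤ 1 / 2 := abs_sub_round (-c)
      have h2 : (1 : ℝ) ≤ |(round (-c) : ℝ) - (m : ℝ)| := by
        have h0 : round (-c) - m ≠ 0 := sub_ne_zero.mpr (Ne.symm hm)
        exact_mod_cast Int.one_le_abs h0
      have h3 := abs_sub_le ((round (-c) : ℝ)) (-c) (m : ℝ)
      have h4 : |(round (-c) : ℝ) - (-c)| = |(-c) - round (-c)| := abs_sub_comm _ _
      linarith
  have hsq := pow_le_pow_left₀ (abs_nonneg _) habs 2
  rw [_root_.sq_abs, _root_.sq_abs] at hsq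
  calc ((round (-c) : ℝ) + c) ^ 2 = ((-c) - round (-c)) ^ 2 := by ring
    _ ≤ ((-c) - m) ^ 2 := hsq
    _ = ((m : ℝ) + c) ^ 2 := by ring

lemma sInf_S1_eq (c : ℝ) : sInf (S1 c) = ((round (-c) : ℝ) + c) ^ 2 :=
  le_antisymm (sInf_S1_le c _)
    (le_csInf (S1_nonempty c) (by rintro x ⟨m, rfl⟩; exact round_min c m))

lemma sInf_sum {M : ℕ} (cv : Fin M → ℝ) :
    sInf {x : ℝ | ∃ m : Fin M → ℤ, x = ∑ i, ((m i : ℝ) + cv i) ^ 2}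
      = ∑ i, sInf (S1 (cv i)) := by
  apply le_antisymm
  · refine csInf_le ⟨0, ?_⟩ ⟨fun i => round (-(cv i)), ?_⟩
    · rintro x ⟨m, rfl⟩; positivity
    · exact Finset.sum_congr rfl fun i _ => by rw [sInf_S1_eq]
  · refine le_csInf ⟨∑ i, ((0:ℤ) + cv i)^2, fun _ => 0, by push_cast; ring_nf⟩ ?_
    rintro x ⟨m, rfl⟩
    exact Finset.sum_le_sum fun i _ => sInf_S1_le (cv i) (m i)

lemma liftIco_eval {f : ℝ → ℂ} (hfper : Function.Periodic f (2 * Real.pi)) (x : ℝ) :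
    AddCircle.liftIco (2 * Real.pi) 0 f ↑x = f x := by
  set T := 2 * Real.pi with hT
  set m : ℤ := ⌊x / T⌋ with hm
  have h1 : 0 ≤ x - m * T := Int.sub_floor_div_mul_nonneg x twopi_pos
  have h2 : x - m * T < T := Int.sub_floor_div_mul_lt x twopi_pos
  have hmem : x - m • T ∈ Set.Ico (0:ℝ) (0 + T) := by
    rw [zsmul_eq_mul, zero_add]; exact ⟨h1, h2⟩
  have hcoe : (↑x : AddCircle T) = ↑(x - m • T) := by
    rw [QuotientAddGroup.mk_sub]
    have : ((m • T : ℝ) : AddCircle T) = 0 := by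
      rw [AddCircle.coe_zsmul, AddCircle.coe_period, smul_zero]
    rw [this, sub_zero]
  rw [hcoe, AddCircle.liftIco_coe_apply hmem, hfper.sub_zsmul_eq]

/-- Key 1D estimate. -/
lemma oneD (c : ℝ) (f f' : ℝ → ℂ) (hf : ∀ t, HasDerivAt f (f' t) t)
    (hf'c : Continuous f') (hper : ∀ t, f (t + 2 * Real.pi) = f t) :
    (sInf (S1 c)) * ∫ t in Set.Ioc (0:ℝ) (2 * Real.pi), ‖f t‖ ^ 2 ≤
      ∫ t in Set.Ioc (0:ℝ) (2 * Real.pi), ‖f' t + Complex.I * c * f t‖ ^ 2 := by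
  have hfc : Continuous f := by
    rw [continuous_iff_continuousAt]; exact fun t => (hf t).continuousAt
  set T := 2 * Real.pi with hTdef
  have hperf : Function.Periodic f T := hper
  have hab : (0:ℝ) < 0 + T := by rw [zero_add]; exact twopi_pos
  -- periodicity of f'
  have hperf' : Function.Periodic f' T := by
    intro t
    have h1 : HasDerivAt (fun s => f (s + T)) (f' (t + T)) t :=
      HasDerivAt.comp_add_const t T (hf (t + T))
    have h2 : (fun s => f (s + T)) = f := funext hper
    rw [h2] at h1
    exact h1.unique (hf t)
  set g : ℝ → ℂ := fun t => f' t + Complex.I * c * f t with hg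
  have hgc : Continuous g := by fun_prop
  have hperg : Function.Periodic g T := fun t => by simp only [g, hperf t, hperf' t]
  -- continuous lifts
  have hf0 : f 0 = f (0 + T) := (hper 0).symm
  have hg0 : g 0 = g (0 + T) := (hperg 0).symm
  -- continuous lifts to the circle
  set FC : C(AddCircle T, ℂ) := ⟨AddCircle.liftIco T 0 f,
    AddCircle.liftIco_continuous (by simpa using hf0) (by simpa using hfc.continuousOn)⟩ with hFCdef
  set GC : C(AddCircle T, ℂ) := ⟨AddCircle.liftIco T 0 g,
    AddCircle.liftIco_continuous (by simpa using hg0) (by simpa using hgc.continuousOn)⟩ with hGCdef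
  have hFCeval : ∀ x : ℝ, FC ↑x = f x := fun x => liftIco_eval hperf x
  have hGCeval : ∀ x : ℝ, GC ↑x = g x := fun x => liftIco_eval hperg x
  set F2 : Lp ℂ 2 (@AddCircle.haarAddCircle T _) :=
    ContinuousMap.toLp (E := ℂ) 2 AddCircle.haarAddCircle ℂ FC with hF2def
  set G2 : Lp ℂ 2 (@AddCircle.haarAddCircle T _) :=
    ContinuousMap.toLp (E := ℂ) 2 AddCircle.haarAddCircle ℂ GC with hG2def
  -- Fourier coefficients of the Lp lifts are interval Fourier coefficients
  have hcoefff : ∀ n : ℤ, fourierCoeff (F2 : AddCircle T → ℂ) n = fourierCoeffOn hab f n := by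
    intro n
    rw [hF2def, fourierCoeff_toLp]
    exact fourierCoeff_liftIco_eq (T := T) (a := 0) f n
  have hcoeffg : ∀ n : ℤ, fourierCoeff (G2 : AddCircle T → ℂ) n = fourierCoeffOn hab g n := by
    intro n
    rw [hG2def, fourierCoeff_toLp]
    exact fourierCoeff_liftIco_eq (T := T) (a := 0) g n
  -- Fourier coefficients of the derivative
  have hD : ∀ n : ℤ, fourierCoeffOn hab f' n = Complex.I * n * fourierCoeffOn hab f n := by
    intro n
    by_cases hn : n = 0
    · subst hn
      rw [fourierCoeffOn_eq_integral]
      have : (∫ x in (0:ℝ)..(0 + T), fourier (-(0:ℤ)) (x : AddCircle (0 + T - 0)) • f' x)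
          = ∫ x in (0:ℝ)..(0 + T), f' x := by
        congr 1; funext x; simp [fourier_zero]
      rw [this, intervalIntegral.integral_eq_sub_of_hasDerivAt (fun x _ => hf x)
        (hf'c.intervalIntegrable _ _), ← hf0, sub_self, smul_zero]
      simp
    · have key := fourierCoeffOn_of_hasDerivAt hab hn (fun x _ => hf x)
        (hf'c.intervalIntegrable 0 (0 + T))
      have hf0' : f (0 + T) - f 0 = 0 := by rw [← hf0, sub_self]
      rw [hf0', mul_zero, zero_sub] at key
      have hπ : (Real.pi : ℂ) ≠ 0 := Complex.ofReal_ne_zero.mpr Real.pi_ne_zero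
      have hn' : (n : ℂ) ≠ 0 := Int.cast_ne_zero.mpr hn
      rw [key]
      generalize fourierCoeffOn hab f' n = Y
      simp only [hTdef]
      push_cast
      field_simp
      ring
  -- linearity of Fourier coefficients
  have hG : ∀ n : ℤ, fourierCoeffOn hab g n
      = Complex.I * ((n : ℂ) + (c : ℂ)) * fourierCoeffOn hab f n := by
    intro n
    have hfour : Continuous fun x : ℝ => fourier (-n) (x : AddCircle (0 + T - 0)) :=
      (map_continuous (fourier (-n))).comp (AddCircle.continuous_mk' _)
    have e1 : IntervalIntegrable (fun x : ℝ => fourier (-n) (x : AddCircle (0 + T - 0)) • f' x)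
        volume 0 (0 + T) := (hfour.smul hf'c).intervalIntegrable _ _
    have e2 : IntervalIntegrable
        (fun x : ℝ => Complex.I * c * (fourier (-n) (x : AddCircle (0 + T - 0)) • f x))
        volume 0 (0 + T) := (continuous_const.mul (hfour.smul hfc)).intervalIntegrable _ _
    have hint : (∫ x in (0:ℝ)..(0 + T), fourier (-n) (x : AddCircle (0 + T - 0)) • g x)
        = (∫ x in (0:ℝ)..(0 + T), fourier (-n) (x : AddCircle (0 + T - 0)) • f' x)
          + Complex.I * c * ∫ x in (0:ℝ)..(0 + T), fourier (-n) (x : AddCircle (0 + T - 0)) • f x := by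
      rw [← intervalIntegral.integral_const_mul, ← intervalIntegral.integral_add e1 e2]
      congr 1; funext x
      simp only [smul_eq_mul, hg]
      ring
    have : fourierCoeffOn hab g n = fourierCoeffOn hab f' n
        + Complex.I * c * fourierCoeffOn hab f n := by
      rw [fourierCoeffOn_eq_integral, fourierCoeffOn_eq_integral, fourierCoeffOn_eq_integral,
        hint, smul_add, mul_smul_comm]
    rw [this, hD n]
    ring
  -- Parseval for the two lifts
  have hPar : ∀ (H2 : Lp ℂ 2 (@AddCircle.haarAddCircle T _)) (HC : C(AddCircle T, ℂ)),
      H2 = ContinuousMap.toLp (E := ℂ) 2 AddCircle.haarAddCircle ℂ HC → ∀ (h : ℝ → ℂ),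
      (∀ x : ℝ, HC ↑x = h x) →
      ∑' n : ℤ, ‖fourierCoeff (H2 : AddCircle T → ℂ) n‖ ^ 2
        = (1 / T) * ∫ t in Set.Ioc (0:ℝ) T, ‖h t‖ ^ 2 := by
    intro H2 HC hH h hHeval
    rw [tsum_sq_fourierCoeff H2]
    have e1 : ∫ t : AddCircle T, ‖(H2 : AddCircle T → ℂ) t‖ ^ 2 ∂AddCircle.haarAddCircle
        = ∫ t : AddCircle T, ‖HC t‖ ^ 2 ∂AddCircle.haarAddCircle := by
      rw [hH]
      exact integral_congr_ae ((ContinuousMap.coeFn_toLp (p := 2)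
        AddCircle.haarAddCircle (𝕜 := ℂ) HC).mono fun t ht => by simp only [ht])
    have e2 : ∫ t : AddCircle T, ‖HC t‖ ^ 2
        = T * ∫ t : AddCircle T, ‖HC t‖ ^ 2 ∂AddCircle.haarAddCircle := by
      rw [AddCircle.volume_eq_smul_haarAddCircle, MeasureTheory.integral_smul_measure,
        ENNReal.toReal_ofReal twopi_pos.le, smul_eq_mul]
    have e3 : (∫ t in Set.Ioc (0:ℝ) (0 + T), ‖HC (t : AddCircle T)‖ ^ 2)
        = ∫ t : AddCircle T, ‖HC t‖ ^ 2 :=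
      AddCircle.integral_preimage T 0 (fun t => ‖HC t‖ ^ 2)
    have e4 : (∫ t in Set.Ioc (0:ℝ) (0 + T), ‖HC (t : AddCircle T)‖ ^ 2)
        = ∫ t in Set.Ioc (0:ℝ) T, ‖h t‖ ^ 2 := by
      rw [zero_add]
      exact setIntegral_congr_fun measurableSet_Ioc fun t _ => by rw [hHeval t]
    rw [e1, ← e4, e3, e2]
    field_simp [show T ≠ 0 from twopi_pos.ne']
  have sumF : Summable fun n : ℤ => ‖fourierCoeff (F2 : AddCircle T → ℂ) n‖ ^ 2 := by
    have h := (lp.memℓp ((@fourierBasis T _).repr F2)).summable (by norm_num)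
    exact h.congr fun n => by
      rw [show ((2:ℝ≥0∞).toReal) = ((2:ℕ):ℝ) by norm_num, Real.rpow_natCast,
        fourierBasis_repr]
  have sumG : Summable fun n : ℤ => ‖fourierCoeff (G2 : AddCircle T → ℂ) n‖ ^ 2 := by
    have h := (lp.memℓp ((@fourierBasis T _).repr G2)).summable (by norm_num)
    exact h.congr fun n => by
      rw [show ((2:ℝ≥0∞).toReal) = ((2:ℕ):ℝ) by norm_num, Real.rpow_natCast,
        fourierBasis_repr]
  have hAf := hPar F2 FC hF2def f hFCeval
  have hAg := hPar G2 GC hG2def g hGCeval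
  simp only [hcoefff] at hAf sumF
  simp only [hcoeffg] at hAg sumG
  have hf_int : ∫ t in Set.Ioc (0:ℝ) T, ‖f t‖ ^ 2
      = T * ∑' n : ℤ, ‖fourierCoeffOn hab f n‖ ^ 2 := by
    rw [hAf]; field_simp [show T ≠ 0 from twopi_pos.ne']
  have hg_int : ∫ t in Set.Ioc (0:ℝ) T, ‖g t‖ ^ 2
      = T * ∑' n : ℤ, ‖fourierCoeffOn hab g n‖ ^ 2 := by
    rw [hAg]; field_simp [show T ≠ 0 from twopi_pos.ne']
  have hnormg : ∀ n : ℤ, ‖fourierCoeffOn hab g n‖ ^ 2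
      = ((n : ℝ) + c) ^ 2 * ‖fourierCoeffOn hab f n‖ ^ 2 := by
    intro n
    rw [hG n, norm_mul, mul_pow]
    congr 1
    rw [norm_mul, Complex.norm_I, one_mul,
      show ((n:ℂ) + (c:ℂ)) = (((n : ℝ) + c : ℝ) : ℂ) by push_cast; ring,
      Complex.norm_real, Real.norm_eq_abs]
    exact sq_abs _
  show sInf (S1 c) * ∫ t in Set.Ioc (0:ℝ) T, ‖f t‖ ^ 2 ≤ ∫ t in Set.Ioc (0:ℝ) T, ‖g t‖ ^ 2
  rw [hf_int, hg_int]
  calc sInf (S1 c) * (T * ∑' n : ℤ, ‖fourierCoeffOn hab f n‖ ^ 2)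
      = T * ∑' n : ℤ, sInf (S1 c) * ‖fourierCoeffOn hab f n‖ ^ 2 := by
        rw [tsum_mul_left]; ring
    _ ≤ T * ∑' n : ℤ, ((n : ℝ) + c) ^ 2 * ‖fourierCoeffOn hab f n‖ ^ 2 := by
        refine mul_le_mul_of_nonneg_left (Summable.tsum_le_tsum (fun n => ?_)
          (sumF.mul_left _) (sumG.congr hnormg)) twopi_pos.le
        exact mul_le_mul_of_nonneg_right (sInf_S1_le c n) (by positivity)
    _ = T * ∑' n : ℤ, ‖fourierCoeffOn hab g n‖ ^ 2 := by
        congr 1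
        exact tsum_congr fun n => (hnormg n).symm


-- ### Part 3: Fubini on the box

lemma box_measure (M : ℕ) :
    Measure.pi (fun _ : Fin M => (volume : Measure ℝ).restrict (Icc (0:ℝ) (2 * Real.pi)))
      = (volume : Measure (Fin M → ℝ)).restrict
          (Set.Icc (0 : Fin M → ℝ) (fun _ => 2 * Real.pi)) := by
  rw [show (Set.Icc (0 : Fin M → ℝ) (fun _ => 2 * Real.pi))
      = Set.pi Set.univ (fun _ : Fin M => Icc (0:ℝ) (2 * Real.pi)) from (Set.pi_univ_Icc _ _).symm]
  refine (Measure.pi_eq fun s hs => ?_)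
  rw [Measure.restrict_apply (MeasurableSet.univ_pi hs), volume_pi,
    show Set.pi Set.univ s ∩ Set.pi Set.univ (fun _ : Fin M => Icc (0:ℝ) (2 * Real.pi))
      = Set.pi Set.univ (fun i => s i ∩ Icc (0:ℝ) (2 * Real.pi)) from
        (Set.pi_inter_distrib).symm,
    Measure.pi_pi]
  exact Finset.prod_congr rfl fun i _ => (Measure.restrict_apply (hs i)).symm

lemma integrable_box {M : ℕ} (h : (Fin M → ℝ) → ℝ) (hc : Continuous h) :
    Integrable h
      (Measure.pi fun _ : Fin M => (volume : Measure ℝ).restrict (Icc (0:ℝ) (2 * Real.pi))) := by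
  rw [box_measure M]
  exact hc.continuousOn.integrableOn_compact isCompact_Icc

lemma fubini_coord_aux {N : ℕ} (i : Fin (N+1)) (h : (Fin (N+1) → ℝ) → ℝ) (hc : Continuous h) :
    Integrable (fun p : ℝ × (Fin N → ℝ) => h (i.insertNth p.1 p.2))
      (((volume : Measure ℝ).restrict (Icc (0:ℝ) (2 * Real.pi))).prod
        (Measure.pi fun _ : Fin N => (volume : Measure ℝ).restrict (Icc (0:ℝ) (2 * Real.pi)))) := by
  set ν1 := (volume : Measure ℝ).restrict (Icc (0:ℝ) (2 * Real.pi)) with hν1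
  have mp := measurePreserving_piFinSuccAbove (fun _ : Fin (N+1) => ν1) i
  set e := MeasurableEquiv.piFinSuccAbove (fun _ : Fin (N+1) => ℝ) i with he
  have h1 : Integrable h (Measure.pi fun _ : Fin (N+1) => ν1) := integrable_box h hc
  have h2 := ((mp.symm e).integrable_comp_emb e.symm.measurableEmbedding
    (g := h)).mpr h1
  refine h2.congr (Filter.Eventually.of_forall fun p => ?_)
  simp [Function.comp, e, MeasurableEquiv.piFinSuccAbove, Fin.insertNthEquiv]

lemma fubini_coord {N : ℕ} (i : Fin (N+1)) (h : (Fin (N+1) → ℝ) → ℝ) (hc : Continuous h) :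
    (∫ θ, h θ ∂(Measure.pi fun _ : Fin (N+1) =>
        (volume : Measure ℝ).restrict (Icc (0:ℝ) (2 * Real.pi))))
      = ∫ y, (∫ t in Icc (0:ℝ) (2 * Real.pi), h (i.insertNth t y))
          ∂(Measure.pi fun _ : Fin N =>
              (volume : Measure ℝ).restrict (Icc (0:ℝ) (2 * Real.pi))) := by
  set ν1 := (volume : Measure ℝ).restrict (Icc (0:ℝ) (2 * Real.pi)) with hν1
  have mp := measurePreserving_piFinSuccAbove (fun _ : Fin (N+1) => ν1) i
  set e := MeasurableEquiv.piFinSuccAbove (fun _ : Fin (N+1) => ℝ) i with he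
  have key : (∫ θ, h θ ∂(Measure.pi fun _ : Fin (N+1) => ν1))
      = ∫ p, h (i.insertNth p.1 p.2) ∂(ν1.prod (Measure.pi fun _ : Fin N => ν1)) := by
    rw [← mp.integral_comp' (fun p => h (i.insertNth p.1 p.2))]
    refine integral_congr_ae (Filter.Eventually.of_forall fun θ => ?_)
    simp [e, MeasurableEquiv.piFinSuccAbove, Fin.insertNthEquiv]
  rw [key, MeasureTheory.integral_prod _ (fubini_coord_aux i h hc)]
  exact integral_integral_swap (f := fun t y => h (i.insertNth t y)) (fubini_coord_aux i h hc)

lemma fubini_coord_integrable {N : ℕ} (i : Fin (N+1)) (h : (Fin (N+1) → ℝ) → ℝ)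
    (hc : Continuous h) :
    Integrable (fun y : Fin N → ℝ => ∫ t in Icc (0:ℝ) (2 * Real.pi), h (i.insertNth t y))
      (Measure.pi fun _ : Fin N =>
        (volume : Measure ℝ).restrict (Icc (0:ℝ) (2 * Real.pi))) :=
  (fubini_coord_aux i h hc).integral_prod_right

/-- Fourier-theoretic lower bound on the torus: for a smooth
`2πℤⁿ`-periodic function `φ`, the twisted Dirichlet energy is bounded below by
`λ(k,b)` times the `L²` norm, where
`λ(k,b) = inf { Σᵢ (mᵢ + k bᵢ)² : m ∈ ℤⁿ }`. -/
theorem torus_twisted_energy_lower_bound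
    (n k : ℕ) (hn : 1 ≤ n) (hk : 1 ≤ k) (b : Fin n → ℝ)
    (φ : (Fin n → ℝ) → ℂ) (hφ : ContDiff ℝ (⊤ : ℕ∞) φ)
    (hper : ∀ (θ : Fin n → ℝ) (m : Fin n → ℤ),
      φ (θ + fun i => 2 * Real.pi * (m i : ℝ)) = φ θ) :
    (∫ θ in Set.Icc (0 : Fin n → ℝ) (fun _ => 2 * Real.pi),
        ∑ i, ‖
          (fderiv ℝ φ θ (Pi.single i 1) + Complex.I * (k : ℂ) * (b i : ℂ) * φ θ)‖ ^ 2) ≥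
      (sInf {x : ℝ | ∃ m : Fin n → ℤ, x = ∑ i, ((m i : ℝ) + k * b i) ^ 2}) *
        ∫ θ in Set.Icc (0 : Fin n → ℝ) (fun _ => 2 * Real.pi),
          ‖(φ θ)‖ ^ 2 := by
  obtain ⟨N, rfl⟩ : ∃ N, n = N + 1 := ⟨n - 1, (Nat.succ_pred_eq_of_pos hn).symm⟩
  rw [ge_iff_le]
  have hcast : ∀ (i : Fin (N+1)) (z : ℂ),
      Complex.I * (k : ℂ) * (b i : ℂ) * z = Complex.I * (((k : ℝ) * b i : ℝ) : ℂ) * z := by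
    intro i z; push_cast; ring
  simp only [hcast]
  have hsinf : sInf {x : ℝ | ∃ m : Fin (N+1) → ℤ, x = ∑ i, ((m i : ℝ) + k * b i) ^ 2}
      = ∑ i, sInf (S1 ((k:ℝ) * b i)) := by
    simpa using sInf_sum (fun i => (k:ℝ) * b i)
  rw [hsinf, ← box_measure (N+1)]
  have hcontφ : Continuous φ := hφ.continuous
  have hcontD : Continuous fun θ : Fin (N+1) → ℝ => fderiv ℝ φ θ := hφ.continuous_fderiv (by simp)
  have hDi : ∀ i : Fin (N+1), Continuous fun θ : Fin (N+1) → ℝ =>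
      ‖fderiv ℝ φ θ (Pi.single i 1) + Complex.I * (((k:ℝ) * b i : ℝ) : ℂ) * φ θ‖ ^ 2 := fun i =>
    (((hcontD.clm_apply continuous_const).add (continuous_const.mul hcontφ)).norm).pow 2
  have hphin : Continuous fun θ : Fin (N+1) → ℝ => ‖φ θ‖ ^ 2 := (hcontφ.norm).pow 2
  have hins : ∀ (i : Fin (N+1)) (y : Fin N → ℝ),
      (fun t : ℝ => i.insertNth t y)
        = fun t => i.insertNth 0 y + t • (Pi.single i 1 : Fin (N+1) → ℝ) := by
    intro i y; funext t; funext j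
    rcases eq_or_ne j i with rfl | hj
    · simp
    · obtain ⟨l, rfl⟩ := Fin.exists_succAbove_eq hj
      simp [Fin.insertNth_apply_succAbove, Pi.single_eq_of_ne (Fin.succAbove_ne i l)]
  have hderiv : ∀ (i : Fin (N+1)) (y : Fin N → ℝ) (t : ℝ),
      HasDerivAt (fun t => φ (i.insertNth t y))
        (fderiv ℝ φ (i.insertNth t y) (Pi.single i 1)) t := by
    intro i y t
    have h1 : HasDerivAt (fun t : ℝ => (i.insertNth t y : Fin (N+1) → ℝ))
        (Pi.single i 1 : Fin (N+1) → ℝ) t := by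
      rw [hins i y]
      simpa using (((hasDerivAt_id t).smul_const
        (Pi.single i 1 : Fin (N+1) → ℝ)).const_add (i.insertNth 0 y))
    exact (hφ.differentiable (by simp) (i.insertNth t y)).hasFDerivAt.comp_hasDerivAt t h1
  have hdercont : ∀ (i : Fin (N+1)) (y : Fin N → ℝ),
      Continuous fun t : ℝ => fderiv ℝ φ (i.insertNth t y) (Pi.single i 1) := by
    intro i y
    have hι : Continuous fun t : ℝ => (i.insertNth t y : Fin (N+1) → ℝ) := by
      rw [hins i y]; exact continuous_const.add (continuous_id.smul continuous_const)
    exact (hcontD.comp hι).clm_apply continuous_const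
  have hpery : ∀ (i : Fin (N+1)) (y : Fin N → ℝ) (t : ℝ),
      φ (i.insertNth (t + 2 * Real.pi) y) = φ (i.insertNth t y) := by
    intro i y t
    have key : i.insertNth (t + 2 * Real.pi) y
        = i.insertNth t y + fun j => 2 * Real.pi * (((Pi.single i 1 : Fin (N+1) → ℤ) j : ℤ) : ℝ) := by
      funext j
      rcases eq_or_ne j i with rfl | hj
      · simp
      · obtain ⟨l, rfl⟩ := Fin.exists_succAbove_eq hj
        simp [Fin.insertNth_apply_succAbove, Pi.single_eq_of_ne (Fin.succAbove_ne i l)]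
    rw [key]
    exact hper _ (Pi.single i 1)
  rw [integral_finset_sum Finset.univ (fun i _ => integrable_box _ (hDi i)), Finset.sum_mul]
  refine Finset.sum_le_sum fun i _ => ?_
  rw [fubini_coord i _ (hDi i), fubini_coord i _ hphin, ← MeasureTheory.integral_const_mul]
  refine integral_mono ((fubini_coord_integrable i _ hphin).const_mul _)
    (fubini_coord_integrable i _ (hDi i)) fun y => ?_
  simp only
  rw [integral_Icc_eq_integral_Ioc, integral_Icc_eq_integral_Ioc]
  exact oneD ((k:ℝ) * b i) (fun t => φ (i.insertNth t y))
    (fun t => fderiv ℝ φ (i.insertNth t y) (Pi.single i 1))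
    (hderiv i y) (hdercont i y) (hpery i y)

end
end

section
/- Let n ≥ 1, k ≥ 1, l ≥ 1 be integers and set j := k·l. For a smooth function φ : ℝⁿ → ℂ define f : ℝⁿ × ℝ → ℂ by f(y,t) := φ(y)·exp(−j‖y‖²/2 − √(−1)·l·t). Then, pointwise on ℝⁿ × ℝ, −Σ_{i=1}^n ∂²f/∂y_i² − k²(1+‖y‖²)·∂²f/∂t² − (j² + j n)·f = ( Σ_{i=1}^n ( −∂²φ/∂y_i² + 2 j y_i ∂φ/∂y_i ) ) · exp(−j‖y‖²/2 − √(−1)·l·t). -/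
open Complex ContinuousLinearMap

lemma aux_cfun (n : ℕ) (a b : ℂ) (p : (Fin n → ℝ) × ℝ) :
    HasFDerivAt (fun q : (Fin n → ℝ) × ℝ => a * ((∑ i, (q.1 i)^2 : ℝ) : ℂ) + b * (q.2 : ℂ))
      (a • (Complex.ofRealCLM.comp ((∑ i, (2 * p.1 i) • ContinuousLinearMap.proj i).comp
        (ContinuousLinearMap.fst ℝ (Fin n → ℝ) ℝ))) +
       b • (Complex.ofRealCLM.comp (ContinuousLinearMap.snd ℝ (Fin n → ℝ) ℝ))) p := by
  have hS : HasFDerivAt (fun y : Fin n → ℝ => ∑ i, (y i)^2)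
      (∑ i, (2 * p.1 i) • (ContinuousLinearMap.proj i : (Fin n → ℝ) →L[ℝ] ℝ)) p.1 := by
    apply HasFDerivAt.fun_sum
    intro i _
    have h : HasFDerivAt (fun y : Fin n → ℝ => y i * y i) _ p.1 :=
      (hasFDerivAt_apply (𝕜 := ℝ) i p.1).mul (hasFDerivAt_apply (𝕜 := ℝ) i p.1)
    have e : (2 * p.1 i) • (ContinuousLinearMap.proj i : (Fin n → ℝ) →L[ℝ] ℝ)
        = p.1 i • ContinuousLinearMap.proj i + p.1 i • ContinuousLinearMap.proj i := by
      rw [two_mul, add_smul]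
    rw [e]
    simpa [sq] using h
  exact HasFDerivAt.add
    (HasFDerivAt.const_mul (Complex.ofRealCLM.hasFDerivAt.comp p (hS.comp p hasFDerivAt_fst)) a)
    (HasFDerivAt.const_mul (Complex.ofRealCLM.hasFDerivAt.comp p hasFDerivAt_snd) b)

lemma keyval (n : ℕ) (a b : ℂ) (g : (Fin n → ℝ) × ℝ → ℂ) (G : ((Fin n → ℝ) × ℝ) →L[ℝ] ℂ)
    (q v : (Fin n → ℝ) × ℝ) (hg : HasFDerivAt g G q) :
    fderiv ℝ (fun r : (Fin n → ℝ) × ℝ =>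
        g r * Complex.exp (a * ((∑ i, (r.1 i)^2 : ℝ) : ℂ) + b * (r.2 : ℂ))) q v
      = g q * (Complex.exp (a * ((∑ i, (q.1 i)^2 : ℝ) : ℂ) + b * (q.2 : ℂ)) *
          (a * ((∑ i, 2 * q.1 i * v.1 i : ℝ) : ℂ) + b * (v.2 : ℂ)))
        + Complex.exp (a * ((∑ i, (q.1 i)^2 : ℝ) : ℂ) + b * (q.2 : ℂ)) * G v := by
  have h : HasFDerivAt (fun r : (Fin n → ℝ) × ℝ =>
      g r * Complex.exp (a * ((∑ i, (r.1 i)^2 : ℝ) : ℂ) + b * (r.2 : ℂ))) _ q :=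
    hg.mul ((aux_cfun n a b q).cexp)
  rw [h.fderiv]
  simp only [ContinuousLinearMap.add_apply, ContinuousLinearMap.smul_apply,
    ContinuousLinearMap.comp_apply, ContinuousLinearMap.coe_fst', ContinuousLinearMap.coe_snd',
    ContinuousLinearMap.coe_sum', Finset.sum_apply, ContinuousLinearMap.proj_apply,
    Complex.ofRealCLM_apply, smul_eq_mul]


/-- The map `φ ↦ φ(y)·e^{−j‖y‖²/2 − i l t}` intertwines the
Gaussian Laplacian `Δ^j_{ℝⁿ}` with `Δ_{k,∞} − (j² + jn)`: pointwise,
`−Σᵢ ∂²f/∂yᵢ² − k²(1+‖y‖²) ∂²f/∂t² − (j² + jn) f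
  = (Σᵢ (−∂²φ/∂yᵢ² + 2j yᵢ ∂φ/∂yᵢ)) · e^{−j‖y‖²/2 − i l t}`. -/
theorem limit_laplacian_intertwine
    (n k l : ℕ) (hn : 1 ≤ n) (hk : 1 ≤ k) (hl : 1 ≤ l) (j : ℕ) (hj : j = k * l)
    (φ : (Fin n → ℝ) → ℂ) (hφ : ContDiff ℝ (⊤ : ℕ∞) φ)
    (f : (Fin n → ℝ) × ℝ → ℂ)
    (hf : f = fun p => φ p.1 *
      Complex.exp (-(j : ℂ) * Complex.ofReal (∑ i, (p.1 i) ^ 2) / 2 -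
        Complex.I * (l : ℂ) * Complex.ofReal p.2)) :
    ∀ p : (Fin n → ℝ) × ℝ,
      (-(∑ i, fderiv ℝ (fun q => fderiv ℝ f q ((Pi.single i 1 : Fin n → ℝ), (0 : ℝ))) p
            ((Pi.single i 1 : Fin n → ℝ), (0 : ℝ)))
        - (k : ℂ) ^ 2 * (1 + Complex.ofReal (∑ i, (p.1 i) ^ 2)) *
            fderiv ℝ (fun q => fderiv ℝ f q ((0 : Fin n → ℝ), (1 : ℝ))) p
              ((0 : Fin n → ℝ), (1 : ℝ))
        - ((j : ℂ) ^ 2 + (j : ℂ) * (n : ℂ)) * f p)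
      = (∑ i, (-(fderiv ℝ (fun y => fderiv ℝ φ y (Pi.single i 1)) p.1 (Pi.single i 1))
            + 2 * (j : ℂ) * Complex.ofReal (p.1 i) * fderiv ℝ φ p.1 (Pi.single i 1))) *
        Complex.exp (-(j : ℂ) * Complex.ofReal (∑ i, (p.1 i) ^ 2) / 2 -
          Complex.I * (l : ℂ) * Complex.ofReal p.2) := by
  intro p
  have hdφ : Differentiable ℝ φ := hφ.differentiable (by simp)
  have hψ : ∀ i : Fin n, Differentiable ℝ (fun y => fderiv ℝ φ y (Pi.single i 1)) :=
    fun i => ((hφ.fderiv_right (m := 1) (WithTop.coe_le_coe.mpr (le_top : ((1 + 1 : ℕ) : ℕ∞) ≤ ⊤))).clm_apply contDiff_const).differentiable one_ne_zero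
  set a : ℂ := -(j : ℂ)/2 with ha
  set b : ℂ := -(Complex.I * l) with hb
  have hexp : ∀ q : (Fin n → ℝ) × ℝ,
      (-(j : ℂ) * Complex.ofReal (∑ i, (q.1 i) ^ 2) / 2 - Complex.I * (l : ℂ) * Complex.ofReal q.2)
        = a * ((∑ i, (q.1 i)^2 : ℝ) : ℂ) + b * (q.2 : ℂ) := fun q => by rw [ha, hb]; ring
  have hf' : f = fun q => φ q.1 * Complex.exp (a * ((∑ i, (q.1 i)^2 : ℝ) : ℂ) + b * (q.2 : ℂ)) := by
    rw [hf]; funext q; rw [hexp q]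
  -- first y-derivatives
  have hF : ∀ i : Fin n, (fun q : (Fin n → ℝ) × ℝ => fderiv ℝ f q ((Pi.single i 1 : Fin n → ℝ), (0:ℝ)))
      = fun q => (fderiv ℝ φ q.1 (Pi.single i 1) + φ q.1 * (2 * a * ((q.1 i : ℝ) : ℂ)))
          * Complex.exp (a * ((∑ i, (q.1 i)^2 : ℝ) : ℂ) + b * (q.2 : ℂ)) := by
    intro i
    funext q
    rw [hf']
    have h := keyval n a b (fun r => φ r.1)
      ((fderiv ℝ φ q.1).comp (ContinuousLinearMap.fst ℝ (Fin n → ℝ) ℝ)) q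
      ((Pi.single i 1 : Fin n → ℝ), (0:ℝ))
      ((hdφ q.1).hasFDerivAt.comp q hasFDerivAt_fst)
    rw [h]
    have hs : ∑ m, 2 * q.1 m * (Pi.single i 1 : Fin n → ℝ) m = 2 * q.1 i := by
      simp [Pi.single_apply, mul_ite, Finset.sum_ite_eq']
    simp only [ContinuousLinearMap.comp_apply, ContinuousLinearMap.coe_fst', hs]
    push_cast
    ring
  -- first t-derivative
  have hFt : (fun q : (Fin n → ℝ) × ℝ => fderiv ℝ f q ((0 : Fin n → ℝ), (1:ℝ)))
      = fun q => (φ q.1 * b)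
          * Complex.exp (a * ((∑ i, (q.1 i)^2 : ℝ) : ℂ) + b * (q.2 : ℂ)) := by
    funext q
    rw [hf']
    have h := keyval n a b (fun r => φ r.1)
      ((fderiv ℝ φ q.1).comp (ContinuousLinearMap.fst ℝ (Fin n → ℝ) ℝ)) q
      ((0 : Fin n → ℝ), (1:ℝ))
      ((hdφ q.1).hasFDerivAt.comp q hasFDerivAt_fst)
    rw [h]
    simp only [ContinuousLinearMap.comp_apply, ContinuousLinearMap.coe_fst']
    simp
    ring
  -- second y-derivatives
  have h2 : ∀ i : Fin n,
      fderiv ℝ (fun q => fderiv ℝ f q ((Pi.single i 1 : Fin n → ℝ), (0 : ℝ))) p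
          ((Pi.single i 1 : Fin n → ℝ), (0 : ℝ))
        = ((fderiv ℝ φ p.1 (Pi.single i 1) + φ p.1 * (2 * a * ((p.1 i : ℝ) : ℂ)))
              * (2 * a * ((p.1 i : ℝ) : ℂ))
            + (fderiv ℝ (fun y => fderiv ℝ φ y (Pi.single i 1)) p.1 (Pi.single i 1)
              + (φ p.1 * (2 * a) + 2 * a * ((p.1 i : ℝ) : ℂ) * fderiv ℝ φ p.1 (Pi.single i 1))))
          * Complex.exp (a * ((∑ i, (p.1 i)^2 : ℝ) : ℂ) + b * (p.2 : ℂ)) := by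
    intro i
    rw [hF i]
    have hlin : HasFDerivAt (fun q : (Fin n → ℝ) × ℝ => 2 * a * ((q.1 i : ℝ) : ℂ))
        ((2 * a) • (Complex.ofRealCLM.comp ((ContinuousLinearMap.proj i).comp
          (ContinuousLinearMap.fst ℝ (Fin n → ℝ) ℝ)))) p :=
      HasFDerivAt.const_mul
        (Complex.ofRealCLM.hasFDerivAt.comp p
          ((hasFDerivAt_apply (𝕜 := ℝ) i p.1).comp p hasFDerivAt_fst)) (2 * a)
    have hg : HasFDerivAt
        (fun q : (Fin n → ℝ) × ℝ => fderiv ℝ φ q.1 (Pi.single i 1) + φ q.1 * (2 * a * ((q.1 i : ℝ) : ℂ)))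
        ((fderiv ℝ (fun y => fderiv ℝ φ y (Pi.single i 1)) p.1).comp
            (ContinuousLinearMap.fst ℝ (Fin n → ℝ) ℝ)
          + (φ p.1 • ((2 * a) • (Complex.ofRealCLM.comp ((ContinuousLinearMap.proj i).comp
              (ContinuousLinearMap.fst ℝ (Fin n → ℝ) ℝ))))
            + (2 * a * ((p.1 i : ℝ) : ℂ)) • ((fderiv ℝ φ p.1).comp
              (ContinuousLinearMap.fst ℝ (Fin n → ℝ) ℝ)))) p :=
      HasFDerivAt.add
        (((hψ i) p.1).hasFDerivAt.comp p hasFDerivAt_fst)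
        (HasFDerivAt.mul ((hdφ p.1).hasFDerivAt.comp p hasFDerivAt_fst) hlin)
    have h := keyval n a b _ _ p ((Pi.single i 1 : Fin n → ℝ), (0:ℝ)) hg
    rw [h]
    have hs : ∑ m, 2 * p.1 m * (Pi.single i 1 : Fin n → ℝ) m = 2 * p.1 i := by
      simp [Pi.single_apply, mul_ite, Finset.sum_ite_eq']
    simp only [ContinuousLinearMap.add_apply, ContinuousLinearMap.comp_apply,
      ContinuousLinearMap.coe_fst', ContinuousLinearMap.smul_apply,
      ContinuousLinearMap.proj_apply, Complex.ofRealCLM_apply, smul_eq_mul, hs,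
      Pi.single_eq_same]
    push_cast
    ring
  -- second t-derivative
  have h2t : fderiv ℝ (fun q => fderiv ℝ f q ((0 : Fin n → ℝ), (1 : ℝ))) p
        ((0 : Fin n → ℝ), (1 : ℝ))
      = (φ p.1 * b * b)
          * Complex.exp (a * ((∑ i, (p.1 i)^2 : ℝ) : ℂ) + b * (p.2 : ℂ)) := by
    rw [hFt]
    have hg : HasFDerivAt (fun q : (Fin n → ℝ) × ℝ => φ q.1 * b)
        (b • ((fderiv ℝ φ p.1).comp (ContinuousLinearMap.fst ℝ (Fin n → ℝ) ℝ))) p :=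
      HasFDerivAt.mul_const ((hdφ p.1).hasFDerivAt.comp p hasFDerivAt_fst) b
    have h := keyval n a b _ _ p ((0 : Fin n → ℝ), (1:ℝ)) hg
    rw [h]
    simp only [ContinuousLinearMap.smul_apply, ContinuousLinearMap.comp_apply,
      ContinuousLinearMap.coe_fst', smul_eq_mul]
    simp
    ring
  -- assemble
  rw [hexp p]
  have hS' : (((∑ i, (p.1 i)^2 : ℝ)) : ℂ) = ∑ i, ((p.1 i : ℝ) : ℂ) * ((p.1 i : ℝ) : ℂ) := by
    push_cast
    exact Finset.sum_congr rfl fun i _ => by ring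
  set Ep : ℂ := Complex.exp (a * ((∑ i, (p.1 i)^2 : ℝ) : ℂ) + b * (p.2 : ℂ)) with hEp
  set T1 : ℂ := ∑ i, ((p.1 i : ℝ) : ℂ) * fderiv ℝ φ p.1 (Pi.single i 1) with hT1
  set T2 : ℂ := ∑ i, fderiv ℝ (fun y => fderiv ℝ φ y (Pi.single i 1)) p.1 (Pi.single i 1) with hT2
  have hsum1 : ∑ i, ((fderiv ℝ φ p.1 (Pi.single i 1) + φ p.1 * (2 * a * ((p.1 i : ℝ) : ℂ)))
              * (2 * a * ((p.1 i : ℝ) : ℂ))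
            + (fderiv ℝ (fun y => fderiv ℝ φ y (Pi.single i 1)) p.1 (Pi.single i 1)
              + (φ p.1 * (2 * a) + 2 * a * ((p.1 i : ℝ) : ℂ) * fderiv ℝ φ p.1 (Pi.single i 1))))
          * Ep
      = (4 * a^2 * (∑ i, ((p.1 i : ℝ) : ℂ) * ((p.1 i : ℝ) : ℂ)) * φ p.1
          + 4 * a * T1 + 2 * a * (n : ℂ) * φ p.1 + T2) * Ep := by
    rw [← Finset.sum_mul]
    congr 1
    have : ∀ i : Fin n, ((fderiv ℝ φ p.1 (Pi.single i 1) + φ p.1 * (2 * a * ((p.1 i : ℝ) : ℂ)))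
              * (2 * a * ((p.1 i : ℝ) : ℂ))
            + (fderiv ℝ (fun y => fderiv ℝ φ y (Pi.single i 1)) p.1 (Pi.single i 1)
              + (φ p.1 * (2 * a) + 2 * a * ((p.1 i : ℝ) : ℂ) * fderiv ℝ φ p.1 (Pi.single i 1))))
        = 4 * a^2 * (((p.1 i : ℝ) : ℂ) * ((p.1 i : ℝ) : ℂ)) * φ p.1
          + 4 * a * (((p.1 i : ℝ) : ℂ) * fderiv ℝ φ p.1 (Pi.single i 1))
          + 2 * a * φ p.1
          + fderiv ℝ (fun y => fderiv ℝ φ y (Pi.single i 1)) p.1 (Pi.single i 1) :=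
      fun i => by ring
    rw [Finset.sum_congr rfl fun i _ => this i]
    rw [Finset.sum_add_distrib, Finset.sum_add_distrib, Finset.sum_add_distrib,
      ← Finset.sum_mul, ← Finset.mul_sum, ← Finset.mul_sum, Finset.sum_const,
      Finset.card_univ, Fintype.card_fin, nsmul_eq_mul, ← hT1, ← hT2]
    ring
  have hsum2 : ∑ i, (-(fderiv ℝ (fun y => fderiv ℝ φ y (Pi.single i 1)) p.1 (Pi.single i 1))
            + 2 * (j : ℂ) * ((p.1 i : ℝ) : ℂ) * fderiv ℝ φ p.1 (Pi.single i 1))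
      = -T2 + 2 * (j : ℂ) * T1 := by
    rw [Finset.sum_add_distrib, Finset.sum_neg_distrib, ← hT2]
    congr 1
    rw [hT1, Finset.mul_sum]
    exact Finset.sum_congr rfl fun i _ => by ring
  simp only [h2, h2t]
  have hfp : f p = φ p.1 * Ep := by rw [hf']
  rw [hfp, hsum1, hsum2, hS', ha, hb, hj]
  push_cast
  linear_combination (-(k:ℂ)^2 * (1 + ∑ i, ((p.1 i : ℝ) : ℂ) * ((p.1 i : ℝ) : ℂ))
      * (φ p.1) * (l:ℂ)^2 * Ep) * Complex.I_sq
end
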